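/- arXiv:1801.09028 — 2 statements merged into one kernel-verified Lean document; each statement's English description precedes it below -/
import Mathlib

section
/- Let n be a positive integer and w : {-1,1}^n → [0,∞) a weight function with nonempty support. For every β with 1/3 ≤ β < 1/2, the weighted Rademacher complexity satisfies R(w) ≥ log₂ w_max + (n·log₂(1−β) + log₂ Z(w) − log₂ w_max) / log₂((1−β)/β). -/
open Finset

/-- Map a boolean to the corresponding element of `{-1, 1} ⊆ ℝ`. -/
noncomputable def sgn (b : Bool) : ℝ := if b then 1 else -1

/-- Standard inner product on `ℝ^ι` restricted to the cube `{-1,1}^ι`. -/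
noncomputable def ip {ι : Type*} [Fintype ι] [DecidableEq ι] (c x : ι → Bool) : ℝ :=
  ∑ i, sgn (c i) * sgn (x i)

/-- `δ(c, w)`: the maximum over the support of `w` of `⟨c,x⟩ + log₂ w(x)`. -/
noncomputable def wdelta {ι : Type*} [Fintype ι] [DecidableEq ι] (c : ι → Bool) (w : (ι → Bool) → ℝ) : ℝ :=
  sSup {y : ℝ | ∃ x, 0 < w x ∧ y = ip c x + Real.logb 2 (w x)}

/-- The weighted Rademacher complexity `R(w) = E_c[δ(c,w)]`, `c` uniform on the cube. -/
noncomputable def wRad {ι : Type*} [Fintype ι] [DecidableEq ι] (w : (ι → Bool) → ℝ) : ℝ :=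
  (∑ c : ι → Bool, wdelta c w) / 2 ^ (Fintype.card ι)

/-- `Z(w)`: the total weight. -/
noncomputable def Zw {ι : Type*} [Fintype ι] [DecidableEq ι] (w : (ι → Bool) → ℝ) : ℝ := ∑ x, w x

/-- `w_min`: the smallest positive weight. -/
noncomputable def wmin {ι : Type*} [Fintype ι] [DecidableEq ι] (w : (ι → Bool) → ℝ) : ℝ :=
  sInf {y : ℝ | ∃ x, 0 < w x ∧ y = w x}

/-- `w_max`: the largest weight. -/
noncomputable def wmax {ι : Type*} [Fintype ι] [DecidableEq ι] (w : (ι → Bool) → ℝ) : ℝ :=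
  sSup {y : ℝ | ∃ x, y = w x}

/-!
Dividing `w` by `w_max` shifts `R` by `log₂ w_max`, so assume `w ≤ 1` and induct on `n`, splitting
the cube into the facets `x 0 = true` and `x 0 = false`. Since the head coordinate of `c` is `±1`
with equal probability, restricting `w` to a facet does not increase `R`; this settles the case
where one facet carries a `(1 - β)`-fraction of `Z(w)`. Otherwise each facet carries at least a
`β`-fraction, and matching the head coordinate of the maximiser to that of `c` gains `1`; scaled by
`log₂((1 - β)/β) = log₂(1 - β) - log₂ β`, this gain turns the loss `log₂ β` in `log₂ Z` into the
required `log₂(1 - β)`. For `n = 0` one needs `log₂((1 - β)/β) ≤ 1`, that is `β ≥ 1/3`.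
-/

open Real

section Cube

variable {ι : Type*} [Fintype ι] [DecidableEq ι]

lemma exists_pos_of_Zw_pos {w : (ι → Bool) → ℝ} (hw : 0 < Zw w) : ∃ x, 0 < w x := by
  obtain ⟨x, -, hx⟩ := exists_lt_of_sum_lt (s := univ) (f := 0) (g := w) (by simpa [Zw] using hw)
  exact ⟨x, hx⟩

lemma Zw_const_mul (a : ℝ) (w : (ι → Bool) → ℝ) : Zw (fun x => a * w x) = a * Zw w :=
  (mul_sum _ _ _).symm

lemma le_wmax (w : (ι → Bool) → ℝ) (x : ι → Bool) : w x ≤ wmax w :=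
  le_csSup ((Set.finite_range w).subset (by rintro _ ⟨x, rfl⟩; exact ⟨x, rfl⟩)).bddAbove ⟨x, rfl⟩

lemma le_wdelta {c x : ι → Bool} {w : (ι → Bool) → ℝ} (hx : 0 < w x) :
    ip c x + logb 2 (w x) ≤ wdelta c w :=
  le_csSup ((Set.finite_range fun x => ip c x + logb 2 (w x)).subset
    (by rintro _ ⟨x, -, rfl⟩; exact ⟨x, rfl⟩)).bddAbove ⟨x, hx, rfl⟩

lemma wdelta_le {c : ι → Bool} {w : (ι → Bool) → ℝ} {a : ℝ} (hw : ∃ x, 0 < w x)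
    (h : ∀ x, 0 < w x → ip c x + logb 2 (w x) ≤ a) : wdelta c w ≤ a := by
  obtain ⟨x, hx⟩ := hw
  exact csSup_le ⟨_, x, hx, rfl⟩ fun _ ⟨x, hx, hy⟩ => hy ▸ h x hx

lemma wdelta_const_mul (c : ι → Bool) {w : (ι → Bool) → ℝ} (hw : ∃ x, 0 < w x) {a : ℝ}
    (ha : 0 < a) : wdelta c (fun x => a * w x) = logb 2 a + wdelta c w := by
  apply le_antisymm
  · refine wdelta_le (hw.imp fun x hx => mul_pos ha hx) fun x hx => ?_
    have hx' : 0 < w x := pos_of_mul_pos_right hx ha.le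
    rw [logb_mul ha.ne' hx'.ne']
    linarith [le_wdelta (c := c) hx']
  · suffices wdelta c w ≤ wdelta c (fun x => a * w x) - logb 2 a by linarith
    refine wdelta_le hw fun x hx => ?_
    have := le_wdelta (c := c) (w := fun x => a * w x) (mul_pos ha hx)
    rw [logb_mul ha.ne' hx.ne'] at this
    linarith

lemma wRad_const_mul {w : (ι → Bool) → ℝ} (hw : ∃ x, 0 < w x) {a : ℝ} (ha : 0 < a) :
    wRad (fun x => a * w x) = logb 2 a + wRad w := by
  simp only [wRad, wdelta_const_mul _ hw ha, sum_add_distrib, sum_const, card_univ,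
    Fintype.card_fun, Fintype.card_bool, nsmul_eq_mul]
  field_simp
  push_cast
  ring

end Cube

section Facets

variable {n : ℕ}

def facet (v : (Fin (n + 1) → Bool) → ℝ) (b : Bool) : (Fin n → Bool) → ℝ :=
  fun x => v (Fin.cons b x)

lemma sum_cube_succ {M : Type*} [AddCommMonoid M] (F : (Fin (n + 1) → Bool) → M) :
    ∑ c, F c = ∑ c : Fin n → Bool, (F (Fin.cons true c) + F (Fin.cons false c)) := by
  rw [← (Fin.consEquiv fun _ => Bool).sum_comp, Fintype.sum_prod_type, Fintype.sum_bool,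
    ← sum_add_distrib]
  rfl

lemma Zw_eq_Zw_facet_add (v : (Fin (n + 1) → Bool) → ℝ) :
    Zw v = Zw (facet v true) + Zw (facet v false) := by
  rw [Zw, sum_cube_succ, sum_add_distrib]
  rfl

lemma ip_cons (ε b : Bool) (c x : Fin n → Bool) :
    ip (Fin.cons ε c) (Fin.cons b x) = sgn ε * sgn b + ip c x :=
  Fin.sum_univ_succ _

lemma wdelta_facet_le {v : (Fin (n + 1) → Bool) → ℝ} (ε b : Bool) (c : Fin n → Bool)
    (hb : ∃ x, 0 < facet v b x) :
    sgn ε * sgn b + wdelta c (facet v b) ≤ wdelta (Fin.cons ε c) v := by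
  suffices wdelta c (facet v b) ≤ wdelta (Fin.cons ε c) v - sgn ε * sgn b by linarith
  refine wdelta_le hb fun x hx => ?_
  have := le_wdelta (c := Fin.cons ε c) hx
  rw [facet, ip_cons] at *
  linarith

lemma wRad_succ (v : (Fin (n + 1) → Bool) → ℝ) :
    wRad v = (∑ c : Fin n → Bool, (wdelta (Fin.cons true c) v + wdelta (Fin.cons false c) v)) /
      (2 * 2 ^ n) := by
  rw [wRad, sum_cube_succ, Fintype.card_fin, pow_succ']

lemma wRad_facet_le {v : (Fin (n + 1) → Bool) → ℝ} (b : Bool) (hb : ∃ x, 0 < facet v b x) :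
    wRad (facet v b) ≤ wRad v := by
  rw [wRad_succ, wRad, Fintype.card_fin, ← div_div]
  refine div_le_div_of_nonneg_right ?_ (by positivity)
  rw [le_div_iff₀ two_pos, sum_mul]
  gcongr with c
  have hsgn : sgn true * sgn b + sgn false * sgn b = 0 := by cases b <;> norm_num [sgn]
  linarith [wdelta_facet_le true b c hb, wdelta_facet_le false b c hb]

lemma one_add_wRad_facet_avg_le {v : (Fin (n + 1) → Bool) → ℝ}
    (hT : ∃ x, 0 < facet v true x) (hF : ∃ x, 0 < facet v false x) :
    1 + (wRad (facet v true) + wRad (facet v false)) / 2 ≤ wRad v := by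
  rw [wRad_succ, wRad, wRad, Fintype.card_fin, le_div_iff₀ (by positivity)]
  have hcard : ∑ _c : Fin n → Bool, (2 : ℝ) = 2 ^ n * 2 := by simp
  field_simp
  rw [← hcard, ← sum_add_distrib, ← sum_add_distrib]
  refine sum_le_sum fun c _ => ?_
  have hT' := wdelta_facet_le true true c hT
  have hF' := wdelta_facet_le false false c hF
  norm_num [sgn] at hT' hF'
  linarith

lemma logb_Zw_le_wRad (v : (Fin 0 → Bool) → ℝ) (hv : 0 < Zw v) : logb 2 (Zw v) ≤ wRad v := by
  rw [Zw, Fintype.sum_unique] at hv ⊢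
  have h := le_wdelta (c := default) hv
  rw [ip, univ_eq_empty, sum_empty, zero_add] at h
  rwa [wRad, Fintype.sum_unique, Fintype.card_fin, pow_zero, div_one]

end Facets

lemma logb_add_logb_le_of_mul_le {a s t : ℝ} (ha : 0 < a) (hs : 0 < s) (h : a * s ≤ t) :
    logb 2 a + logb 2 s ≤ logb 2 t := by
  rw [← logb_mul ha.ne' hs.ne']
  exact logb_le_logb_of_le one_lt_two (mul_pos ha hs) h

theorem mul_logb_one_sub_add_logb_Zw_le {β : ℝ} (hβ0 : 1 / 3 ≤ β) (hβ1 : β < 1 / 2) (n : ℕ)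
    (v : (Fin n → Bool) → ℝ) (hv0 : ∀ x, 0 ≤ v x) (hv1 : ∀ x, v x ≤ 1) (hZ : 0 < Zw v) :
    n * logb 2 (1 - β) + logb 2 (Zw v) ≤ logb 2 ((1 - β) / β) * wRad v := by
  have hβ : 0 < β := by linarith
  have hL : 0 < logb 2 ((1 - β) / β) := logb_pos one_lt_two (by rw [lt_div_iff₀ hβ]; linarith)
  induction n with
  | zero =>
    have hZ1 : Zw v ≤ 1 := by rw [Zw, Fintype.sum_unique]; exact hv1 _
    have hL1 : logb 2 ((1 - β) / β) ≤ 1 := by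
      refine (logb_le_logb_of_le one_lt_two (div_pos (by linarith) hβ) ?_).trans_eq
        (logb_self_eq_one one_lt_two)
      rw [div_le_iff₀ hβ]
      linarith
    have hlogZ := logb_nonpos one_lt_two hZ.le hZ1
    calc ((0 : ℕ) : ℝ) * logb 2 (1 - β) + logb 2 (Zw v)
        ≤ logb 2 ((1 - β) / β) * logb 2 (Zw v) := by push_cast; nlinarith
      _ ≤ logb 2 ((1 - β) / β) * wRad v := by gcongr; exact logb_Zw_le_wRad v hZ
  | succ n ih =>
    have hfacet (b : Bool) (hb : 0 < Zw (facet v b)) :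
        n * logb 2 (1 - β) + logb 2 (Zw (facet v b)) ≤ logb 2 ((1 - β) / β) * wRad (facet v b) :=
      ih _ (fun _ => hv0 _) (fun _ => hv1 _) hb
    have hsplit := Zw_eq_Zw_facet_add v
    push_cast
    by_cases hA : ∃ b, (1 - β) * Zw v ≤ Zw (facet v b)
    · obtain ⟨b, hb⟩ := hA
      have hb0 : 0 < Zw (facet v b) := lt_of_lt_of_le (by nlinarith) hb
      have hlog := logb_add_logb_le_of_mul_le (by linarith) hZ hb
      have hR := mul_le_mul_of_nonneg_left (wRad_facet_le b (exists_pos_of_Zw_pos hb0)) hL.le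
      linarith [hfacet b hb0]
    · simp only [not_exists, not_le] at hA
      have hT : β * Zw v ≤ Zw (facet v true) := by linarith [hA false]
      have hF : β * Zw v ≤ Zw (facet v false) := by linarith [hA true]
      have hT0 : 0 < Zw (facet v true) := lt_of_lt_of_le (by positivity) hT
      have hF0 : 0 < Zw (facet v false) := lt_of_lt_of_le (by positivity) hF
      have hR := mul_le_mul_of_nonneg_left
        (one_add_wRad_facet_avg_le (exists_pos_of_Zw_pos hT0) (exists_pos_of_Zw_pos hF0)) hL.le
      have hLβ : logb 2 ((1 - β) / β) = logb 2 (1 - β) - logb 2 β :=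
        logb_div (by linarith) hβ.ne'
      linarith [hfacet true hT0, hfacet false hF0, logb_add_logb_le_of_mul_le hβ hZ hT,
        logb_add_logb_le_of_mul_le hβ hZ hF]

theorem stmt1_general (n : ℕ) (w : (Fin n → Bool) → ℝ)
    (hw : ∀ x, 0 ≤ w x) (hsupp : ∃ x, 0 < w x)
    (β : ℝ) (hβ0 : 1 / 3 ≤ β) (hβ1 : β < 1 / 2) :
    wRad w ≥ Real.logb 2 (wmax w) +
      ((n : ℝ) * Real.logb 2 (1 - β) + Real.logb 2 (Zw w) - Real.logb 2 (wmax w)) /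
        Real.logb 2 ((1 - β) / β) := by
  obtain ⟨x₀, hx₀⟩ := hsupp
  have hM : 0 < wmax w := hx₀.trans_le (le_wmax w x₀)
  have hZ : 0 < Zw w := lt_of_lt_of_le hx₀ (single_le_sum (fun x _ => hw x) (mem_univ x₀))
  have hL : 0 < logb 2 ((1 - β) / β) :=
    logb_pos one_lt_two (by rw [lt_div_iff₀ (by linarith)]; linarith)
  have key := mul_logb_one_sub_add_logb_Zw_le hβ0 hβ1 n (fun x => (wmax w)⁻¹ * w x)
    (fun x => mul_nonneg (inv_nonneg.2 hM.le) (hw x))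
    (fun x => inv_mul_le_one_of_le₀ (le_wmax w x) hM.le)
    (by rw [Zw_const_mul]; positivity)
  rw [Zw_const_mul, wRad_const_mul ⟨x₀, hx₀⟩ (inv_pos.2 hM), logb_mul (inv_pos.2 hM).ne' hZ.ne',
    logb_inv] at key
  rw [ge_iff_le, ← le_sub_iff_add_le', div_le_iff₀ hL]
  linarith

theorem stmt1 (n : ℕ) (hn : 0 < n) (w : (Fin n → Bool) → ℝ)
    (hw : ∀ x, 0 ≤ w x) (hsupp : ∃ x, 0 < w x)
    (β : ℝ) (hβ0 : 1 / 3 ≤ β) (hβ1 : β < 1 / 2) :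
    wRad w ≥ Real.logb 2 (wmax w) +
      ((n : ℝ) * Real.logb 2 (1 - β) + Real.logb 2 (Zw w) - Real.logb 2 (wmax w)) /
        Real.logb 2 ((1 - β) / β) :=
  stmt1_general n w hw hsupp β hβ0 hβ1
end

section
/- Let n be a positive integer and w : {-1,1}^n → [0,∞) a weight function with nonempty support. If 0 < R(w) − log₂ w_min ≤ n, then log₂ Z(w) ≥ (R(w) − log₂ w_min)²/(2n) + log₂ w_min. -/
/-!
Fix `0 ≤ λ ≤ 1` and let `x_c` attain the maximum defining `δ(c, w)`. As `w(x_c) / w_min ≥ 1`,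
`2^{λ(δ(c,w) - log₂ w_min)} = 2^{λ⟨c,x_c⟩} (w(x_c) / w_min)^λ ≤ ∑ₓ (w(x) / w_min) 2^{λ⟨c,x⟩}`.
Averaging over `c`, with Jensen on the left and `E_c 2^{λ⟨c,x⟩} = cosh(λ ln 2)^n ≤ 2^{nλ²/2}`
on the right, gives `λ(R(w) - log₂ w_min) - nλ²/2 ≤ log₂ Z(w) - log₂ w_min`.
The optimal choice is `λ = (R(w) - log₂ w_min) / n`.
-/

open Finset

open Real

lemma finite_setOf_exists_and_eq {α β : Type*} [Finite α] (P : α → Prop) (f : α → β) :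
    {y | ∃ x, P x ∧ y = f x}.Finite :=
  (Set.finite_range f).subset (by rintro _ ⟨x, -, rfl⟩; exact ⟨x, rfl⟩)

lemma exp_sum_div_card_le {α : Type*} [Fintype α] [Nonempty α] (f : α → ℝ) :
    exp ((∑ a, f a) / Fintype.card α) ≤ (∑ a, exp (f a)) / Fintype.card α := by
  have hN : (0 : ℝ) < Fintype.card α := Nat.cast_pos.2 Fintype.card_pos
  have := convexOn_exp.map_sum_le (t := univ) (w := fun _ => (Fintype.card α : ℝ)⁻¹) (p := f)
    (fun _ _ => by positivity) (by simp [hN.ne']) (fun _ _ => Set.mem_univ _)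
  simpa [smul_eq_mul, ← mul_sum, div_eq_inv_mul] using this

section
variable {ι : Type*} [Fintype ι] [DecidableEq ι]

lemma sum_exp_mul_ip (t : ℝ) (x : ι → Bool) :
    ∑ c : ι → Bool, exp (t * ip c x) = (2 * cosh t) ^ Fintype.card ι := by
  have hcoord : ∀ i, ∑ b : Bool, exp (t * (sgn b * sgn (x i))) = 2 * cosh t := by
    intro i
    rw [Fintype.sum_bool, cosh_eq]
    cases x i <;> simp [sgn] <;> ring
  calc ∑ c : ι → Bool, exp (t * ip c x)
      = ∑ c : ι → Bool, ∏ i, exp (t * (sgn (c i) * sgn (x i))) := by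
        simp only [ip, mul_sum, exp_sum]
    _ = ∏ i, ∑ b : Bool, exp (t * (sgn b * sgn (x i))) :=
      (Fintype.prod_sum fun i b => exp (t * (sgn b * sgn (x i)))).symm
    _ = (2 * cosh t) ^ Fintype.card ι := by simp only [hcoord, prod_const, card_univ]

variable {w : (ι → Bool) → ℝ}

lemma exists_wdelta_eq (c : ι → Bool) (hsupp : ∃ x, 0 < w x) :
    ∃ x, 0 < w x ∧ wdelta c w = ip c x + logb 2 (w x) :=
  let ⟨x, hx⟩ := hsupp
  Set.Nonempty.csSup_mem (s := {y | ∃ x, 0 < w x ∧ y = ip c x + logb 2 (w x)})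
    ⟨_, x, hx, rfl⟩ (finite_setOf_exists_and_eq _ _)

lemma exists_wmin_eq (hsupp : ∃ x, 0 < w x) : ∃ x, 0 < w x ∧ wmin w = w x :=
  let ⟨x, hx⟩ := hsupp
  Set.Nonempty.csInf_mem (s := {y | ∃ x, 0 < w x ∧ y = w x})
    ⟨_, x, hx, rfl⟩ (finite_setOf_exists_and_eq _ _)

lemma wmin_le {x : ι → Bool} (hx : 0 < w x) : wmin w ≤ w x :=
  csInf_le (finite_setOf_exists_and_eq _ _).bddBelow ⟨x, hx, rfl⟩

lemma wmin_pos (hsupp : ∃ x, 0 < w x) : 0 < wmin w := by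
  obtain ⟨x, hx, hmin⟩ := exists_wmin_eq hsupp
  exact hmin ▸ hx

lemma exp_mul_wdelta_sub_le (hw : ∀ x, 0 ≤ w x) (hsupp : ∃ x, 0 < w x) {s : ℝ}
    (hs : s ≤ log 2) (c : ι → Bool) :
    exp (s * (wdelta c w - logb 2 (wmin w))) ≤ ∑ x, w x / wmin w * exp (s * ip c x) := by
  obtain ⟨x, hx, hδ⟩ := exists_wdelta_eq c hsupp
  have hmin := wmin_pos hsupp
  have hsplit : s * (wdelta c w - logb 2 (wmin w)) =
      log (w x / wmin w) * (s / log 2) + s * ip c x := by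
    rw [hδ, log_div hx.ne' hmin.ne', logb, logb]
    field_simp
    ring
  calc exp (s * (wdelta c w - logb 2 (wmin w)))
      = (w x / wmin w) ^ (s / log 2) * exp (s * ip c x) := by
        rw [hsplit, exp_add, rpow_def_of_pos (by positivity)]
    _ ≤ w x / wmin w * exp (s * ip c x) := by
        gcongr
        exact rpow_le_self_of_one_le ((one_le_div hmin).2 (wmin_le hx))
          ((div_le_one (log_pos one_lt_two)).2 hs)
    _ ≤ ∑ x, w x / wmin w * exp (s * ip c x) :=
        single_le_sum (f := fun x => w x / wmin w * exp (s * ip c x))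
          (fun y _ => by have := hw y; positivity) (mem_univ x)

lemma exp_mul_wRad_sub_le (hw : ∀ x, 0 ≤ w x) (hsupp : ∃ x, 0 < w x) {s : ℝ}
    (hs : s ≤ log 2) :
    exp (s * (wRad w - logb 2 (wmin w))) ≤ Zw w / wmin w * cosh s ^ Fintype.card ι := by
  have hcard : (Fintype.card (ι → Bool) : ℝ) = 2 ^ Fintype.card ι := by simp
  have havg : s * (wRad w - logb 2 (wmin w)) =
      (∑ c : ι → Bool, s * (wdelta c w - logb 2 (wmin w))) / Fintype.card (ι → Bool) := by
    rw [← mul_sum, sum_sub_distrib, sum_const, card_univ, nsmul_eq_mul, hcard, wRad]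
    field_simp
  calc exp (s * (wRad w - logb 2 (wmin w)))
      ≤ (∑ c : ι → Bool, exp (s * (wdelta c w - logb 2 (wmin w)))) /
          Fintype.card (ι → Bool) := havg ▸ exp_sum_div_card_le _
    _ ≤ (∑ c : ι → Bool, ∑ x, w x / wmin w * exp (s * ip c x)) / Fintype.card (ι → Bool) := by
        gcongr with c
        exact exp_mul_wdelta_sub_le hw hsupp hs c
    _ = Zw w / wmin w * cosh s ^ Fintype.card ι := by
        rw [sum_comm]
        simp only [← mul_sum, sum_exp_mul_ip, ← sum_mul, ← sum_div, hcard, mul_pow, Zw]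
        field_simp

lemma mul_wRad_sub_le (hw : ∀ x, 0 ≤ w x) (hsupp : ∃ x, 0 < w x) {lam : ℝ} (hlam : lam ≤ 1) :
    lam * (wRad w - logb 2 (wmin w)) - Fintype.card ι * lam ^ 2 / 2 ≤
      logb 2 (Zw w) - logb 2 (wmin w) := by
  set R := wRad w - logb 2 (wmin w)
  set n : ℝ := (Fintype.card ι : ℝ)
  have hlog2 : 0 < log 2 := log_pos one_lt_two
  have hlog2_le : log 2 ≤ 1 := log_two_lt_d9.le.trans (by norm_num)
  have hmin := wmin_pos hsupp
  have hZ : 0 < Zw w :=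
    let ⟨x, hx⟩ := hsupp
    sum_pos' (fun x _ => hw x) ⟨x, mem_univ x, hx⟩
  have hexp : exp (lam * log 2 * R) ≤ Zw w / wmin w * exp (n * (lam * log 2) ^ 2 / 2) := by
    calc exp (lam * log 2 * R)
        ≤ Zw w / wmin w * cosh (lam * log 2) ^ Fintype.card ι :=
          exp_mul_wRad_sub_le hw hsupp (by nlinarith)
      _ ≤ Zw w / wmin w * exp ((lam * log 2) ^ 2 / 2) ^ Fintype.card ι := by
          gcongr
          exact cosh_le_exp_half_sq _
      _ = Zw w / wmin w * exp (n * (lam * log 2) ^ 2 / 2) := by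
          rw [← exp_nat_mul, mul_div_assoc]
  have hln : lam * log 2 * R ≤ log (Zw w) - log (wmin w) + n * (lam * log 2) ^ 2 / 2 := by
    rw [← log_div hZ.ne' hmin.ne', ← log_exp (_ * R), ← log_exp (n * _ / 2),
      ← log_mul (by positivity) (exp_pos _).ne']
    exact log_le_log (exp_pos _) hexp
  rw [logb, logb, ← sub_div, le_div_iff₀ hlog2]
  have hn : 0 ≤ n * lam ^ 2 := by positivity
  nlinarith [mul_nonneg hn (mul_nonneg hlog2.le (sub_nonneg.2 hlog2_le))]

end

theorem stmt9_general (n : ℕ) (w : (Fin n → Bool) → ℝ)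
    (hw : ∀ x, 0 ≤ w x) (hsupp : ∃ x, 0 < w x)
    (h1 : 0 < wRad w - Real.logb 2 (wmin w))
    (h2 : wRad w - Real.logb 2 (wmin w) ≤ n) :
    Real.logb 2 (Zw w) ≥
      (wRad w - Real.logb 2 (wmin w)) ^ 2 / (2 * n) + Real.logb 2 (wmin w) := by
  set R := wRad w - logb 2 (wmin w)
  have hn : (0 : ℝ) < n := h1.trans_le h2
  have key := mul_wRad_sub_le hw hsupp ((div_le_one hn).2 h2)
  have hopt : R / n * R - n * (R / n) ^ 2 / 2 = R ^ 2 / (2 * n) := by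
    field_simp
    ring
  rw [Fintype.card_fin] at key
  linarith

theorem stmt9 (n : ℕ) (hn : 0 < n) (w : (Fin n → Bool) → ℝ)
    (hw : ∀ x, 0 ≤ w x) (hsupp : ∃ x, 0 < w x)
    (h1 : 0 < wRad w - Real.logb 2 (wmin w))
    (h2 : wRad w - Real.logb 2 (wmin w) ≤ n) :
    Real.logb 2 (Zw w) ≥
      (wRad w - Real.logb 2 (wmin w)) ^ 2 / (2 * n) + Real.logb 2 (wmin w) :=
  stmt9_general n w hw hsupp h1 h2
end
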